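/- arXiv:math/0204269 — 3 statements merged into one kernel-verified Lean document; each statement's English description precedes it below -/
import Mathlib

section
/- Let N ≥ 1 be an integer and f ∈ C^N[a,b] with f^{(N)}(x) ≥ μ > 0 for all x ∈ [a,b]. Then for any γ > 0, the Lebesgue measure of the sublevel set {x ∈ [a,b] : |f(x)| ≤ γ} is at most A_N (γ/μ)^{1/N}, where A_N is a constant depending only on N. -/
/-!
Induction on `N`. Put `g = f^{(N-1)}`, so `g' ≥ μ`. By the mean value theorem `g` grows at
rate at least `μ`, hence `{|g| ≤ τ}` has diameter at most `2τ/μ`, while on the two intervals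
`{g > τ}` and `{g < -τ}` the function `f` (resp. `-f`) has `(N-1)`-st derivative at least `τ`,
so the induction hypothesis applies there. Choosing `τ = μ (γ/μ)^{1/N}` balances the three
contributions and gives `A_N = 2^{N+1} - 2`.
-/

open MeasureTheory Set Topology

lemma mul_sub_le_sub_of_le_derivWithin {g : ℝ → ℝ} {s t : Set ℝ} {μ : ℝ}
    (hs : s.OrdConnected) (hst : s ⊆ t) (hg : DifferentiableOn ℝ g t)
    (hμ : ∀ x ∈ s, μ ≤ derivWithin g t x) :
    ∀ x ∈ s, ∀ y ∈ s, x ≤ y → μ * (y - x) ≤ g y - g x := by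
  have ht : ∀ x ∈ interior s, t ∈ 𝓝 x := fun x hx =>
    Filter.mem_of_superset (mem_interior_iff_mem_nhds.1 hx) hst
  refine hs.convex.mul_sub_le_image_sub_of_le_deriv (hg.continuousOn.mono hst)
    (fun x hx =>
      ((hg x (hst (interior_subset hx))).differentiableAt (ht x hx)).differentiableWithinAt)
    fun x hx => ?_
  rw [← derivWithin_of_mem_nhds (ht x hx)]
  exact hμ x (interior_subset hx)

lemma volume_abs_le_le_of_mul_sub_le {s : Set ℝ} {g : ℝ → ℝ} {μ τ : ℝ} (hμ : 0 < μ)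
    (hg : ∀ x ∈ s, ∀ y ∈ s, x ≤ y → μ * (y - x) ≤ g y - g x) :
    volume {x ∈ s | |g x| ≤ τ} ≤ ENNReal.ofReal (2 * τ / μ) := by
  refine (Real.volume_le_diam _).trans (Metric.ediam_le fun x hx y hy => ?_)
  rw [edist_dist, Real.dist_eq]
  refine ENNReal.ofReal_le_ofReal ?_
  wlog hxy : x ≤ y generalizing x y
  · rw [abs_sub_comm]
    exact this y hy x hx (le_of_not_ge hxy)
  have hslope := hg x hx.1 y hy.1 hxy
  have hgx := abs_le.1 hx.2
  have hgy := abs_le.1 hy.2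
  rw [abs_sub_comm, abs_of_nonneg (sub_nonneg.2 hxy), le_div_iff₀ hμ]
  linarith

lemma Set.OrdConnected.sep_lt_apply {s : Set ℝ} {g : ℝ → ℝ} (hs : s.OrdConnected)
    (hg : MonotoneOn g s) (c : ℝ) : {x ∈ s | c < g x}.OrdConnected :=
  ⟨fun _ hx _ hy _ hz =>
    ⟨hs.out hx.1 hy.1 hz, hx.2.trans_le (hg hx.1 (hs.out hx.1 hy.1 hz) hz.1)⟩⟩

lemma Set.OrdConnected.sep_apply_lt {s : Set ℝ} {g : ℝ → ℝ} (hs : s.OrdConnected)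
    (hg : MonotoneOn g s) (c : ℝ) : {x ∈ s | g x < c}.OrdConnected :=
  ⟨fun _ hx _ hy _ hz =>
    ⟨hs.out hx.1 hy.1 hz, (hg (hs.out hx.1 hy.1 hz) hy.1 hz.2).trans_lt hy.2⟩⟩

lemma volume_sep_abs_le_le_add (s : Set ℝ) (f g : ℝ → ℝ) (γ τ : ℝ) :
    volume {x ∈ s | |f x| ≤ γ} ≤
      volume {x ∈ {x ∈ s | g x < -τ} | |(-f) x| ≤ γ} + volume {x ∈ s | |g x| ≤ τ} +
        volume {x ∈ {x ∈ s | τ < g x} | |f x| ≤ γ} := by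
  refine le_trans (measure_mono ?_)
    ((measure_union_le _ _).trans (add_le_add_left (measure_union_le _ _) _))
  rintro x ⟨hxs, hfx⟩
  rcases lt_or_ge (g x) (-τ) with hlt | hge
  · exact .inl (.inl ⟨⟨hxs, hlt⟩, by simpa only [Pi.neg_apply, abs_neg] using hfx⟩)
  rcases le_or_gt (g x) τ with hle | hgt
  · exact .inl (.inr ⟨hxs, abs_le.2 ⟨hge, hle⟩⟩)
  · exact .inr ⟨⟨hxs, hgt⟩, hfx⟩

lemma Real.div_rpow_one_div_succ_rpow_one_div {x : ℝ} (hx : 0 < x) {N : ℕ} (hN : N ≠ 0) :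
    (x / x ^ ((1 : ℝ) / (N + 1))) ^ ((1 : ℝ) / N) = x ^ ((1 : ℝ) / (N + 1)) := by
  have hN' : (N : ℝ) ≠ 0 := Nat.cast_ne_zero.2 hN
  nth_rw 1 [← Real.rpow_one x]
  rw [← Real.rpow_sub hx, ← Real.rpow_mul hx.le]
  congr 1
  field_simp
  ring

theorem volume_abs_le_le_of_le_iteratedDerivWithin {t : Set ℝ} (ht : UniqueDiffOn ℝ t)
    {N : ℕ} (hN : 1 ≤ N) {f : ℝ → ℝ} (hf : ContDiffOn ℝ N f t) {s : Set ℝ}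
    (hs : s.OrdConnected) (hst : s ⊆ t) {μ γ : ℝ} (hμ : 0 < μ) (hγ : 0 < γ)
    (hfμ : ∀ x ∈ s, μ ≤ iteratedDerivWithin N f t x) :
    volume {x ∈ s | |f x| ≤ γ} ≤
      ENNReal.ofReal ((2 ^ (N + 1) - 2) * (γ / μ) ^ ((1 : ℝ) / N)) := by
  induction N, hN using Nat.le_induction generalizing f s μ with
  | base =>
    have hslope := mul_sub_le_sub_of_le_derivWithin hs hst (hf.differentiableOn one_ne_zero)
      (by simpa only [iteratedDerivWithin_one] using hfμ)
    convert volume_abs_le_le_of_mul_sub_le hμ hslope using 2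
    norm_num
    ring
  | succ N hN ih =>
    set g := iteratedDerivWithin N f t
    have hfN : ContDiffOn ℝ N f t := hf.of_le (by exact_mod_cast N.le_succ)
    have hslope : ∀ x ∈ s, ∀ y ∈ s, x ≤ y → μ * (y - x) ≤ g y - g x :=
      mul_sub_le_sub_of_le_derivWithin hs hst
        (hf.differentiableOn_iteratedDerivWithin (by exact_mod_cast N.lt_succ_self) ht)
        (by simpa only [iteratedDerivWithin_succ] using hfμ)
    have hmono : MonotoneOn g s := fun x hx y hy hxy => by
      linarith [hslope x hx y hy hxy, mul_nonneg hμ.le (sub_nonneg.2 hxy)]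
    set r := (γ / μ) ^ ((1 : ℝ) / (N + 1))
    have hr : 0 < r := by positivity
    set τ := μ * r
    have hτ : 0 < τ := by positivity
    have hγτ : (γ / τ) ^ ((1 : ℝ) / N) = r := by
      rw [← div_div]
      exact Real.div_rpow_one_div_succ_rpow_one_div (by positivity) (by omega)
    have hleft := ih (f := -f) hfN.neg (hs.sep_apply_lt hmono (-τ))
      ((sep_subset _ _).trans hst) hτ fun x hx => by rw [iteratedDerivWithin_neg]; linarith [hx.2]
    have hmid := volume_abs_le_le_of_mul_sub_le (τ := τ) hμ hslope
    have hright := ih hfN (hs.sep_lt_apply hmono τ) ((sep_subset _ _).trans hst) hτ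
      fun x hx => hx.2.le
    have hconst : (0 : ℝ) ≤ 2 ^ (N + 1) - 2 := by
      have : (2 : ℝ) ^ 1 ≤ 2 ^ (N + 1) := pow_le_pow_right₀ one_le_two (by omega)
      linarith
    calc volume {x ∈ s | |f x| ≤ γ}
        ≤ volume {x ∈ {x ∈ s | g x < -τ} | |(-f) x| ≤ γ} +
          volume {x ∈ s | |g x| ≤ τ} + volume {x ∈ {x ∈ s | τ < g x} | |f x| ≤ γ} :=
          volume_sep_abs_le_le_add s f g γ τ
      _ ≤ ENNReal.ofReal ((2 ^ (N + 1) - 2) * r) + ENNReal.ofReal (2 * τ / μ) +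
          ENNReal.ofReal ((2 ^ (N + 1) - 2) * r) := by
        rw [← hγτ]
        gcongr
      _ = ENNReal.ofReal ((2 ^ (N + 1 + 1) - 2) * (γ / μ) ^ ((1 : ℝ) / ↑(N + 1))) := by
        rw [← ENNReal.ofReal_add (by positivity) (by positivity),
          ← ENNReal.ofReal_add (by positivity) (by positivity)]
        push_cast
        congr 1
        field_simp
        ring

/-- Christ's sublevel set estimate: if `f^{(N)} ≥ μ > 0` on `[a,b]`, then
`|{x ∈ [a,b] : |f(x)| ≤ γ}| ≤ A_N (γ/μ)^{1/N}`. -/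
theorem stmt_6 (N : ℕ) (hN : 1 ≤ N) :
    ∃ A : ℝ, 0 < A ∧
      ∀ (a b : ℝ) (f : ℝ → ℝ) (μ γ : ℝ),
        a ≤ b → 0 < μ → 0 < γ →
        ContDiffOn ℝ N f (Icc a b) →
        (∀ x ∈ Icc a b, μ ≤ iteratedDerivWithin N f (Icc a b) x) →
        volume {x ∈ Icc a b | |f x| ≤ γ} ≤ ENNReal.ofReal (A * (γ / μ) ^ ((1 : ℝ) / N)) := by
  refine ⟨2 ^ (N + 1) - 2, ?_, fun a b f μ γ hab hμ hγ hf hfμ => ?_⟩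
  · have : (2 : ℝ) ^ 2 ≤ 2 ^ (N + 1) := pow_le_pow_right₀ one_le_two (by omega)
    linarith
  rcases hab.eq_or_lt with rfl | hab
  · rw [measure_mono_null (sep_subset _ _) (by simp)]
    exact zero_le
  exact volume_abs_le_le_of_le_iteratedDerivWithin (uniqueDiffOn_Icc hab) hN hf ordConnected_Icc
    subset_rfl hμ hγ hfμ
end

section
/- Let {T_i} be a family of bounded operators on a Hilbert space H such that T_i T_{i'}* = 0 for all i ≠ i', and such that Σ_{i'} ‖T_i* T_{i'}‖ ≤ C for a constant C independent of i. Then the sum T = Σ_i T_i is bounded with ‖T‖ ≤ C^{1/2}. -/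
/-!
With `S = ∑ Tᵢ`, one-sided orthogonality collapses `S S⋆` to the self-adjoint element
`A = ∑ Tᵢ Tᵢ⋆`, so `‖S‖² = ‖A‖`. Expanding `A^(n+1) = ∑ Tᵢ (Tᵢ⋆ A^n)` and inducting on
`‖Tᵢ⋆ A^n‖ ≤ √C Cⁿ` gives `‖A^(n+1)‖ ≤ |s| Cⁿ⁺¹`. Since `‖A^(2^k)‖ = ‖A‖^(2^k)`, the
constant `|s|` disappears in the limit `k → ∞`, leaving `‖A‖ ≤ C`.
-/

open Filter Finset

theorem le_of_frequently_pow_le_mul_pow {x C M : ℝ} (hC : 0 ≤ C)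
    (h : ∃ᶠ n in atTop, x ^ n ≤ M * C ^ n) : x ≤ C := by
  by_contra! hCx
  have hx : 0 < x := hC.trans_lt hCx
  have hratio : Tendsto (fun n : ℕ => M * (C / x) ^ n) atTop (nhds 0) := by
    simpa using (tendsto_pow_atTop_nhds_zero_of_lt_one (div_nonneg hC hx.le)
      ((div_lt_one hx).2 hCx)).const_mul M
  have hlt : ∀ᶠ n in atTop, M * C ^ n < x ^ n := by
    filter_upwards [hratio.eventually (gt_mem_nhds one_pos)] with n hn
    have hxn : 0 < x ^ n := pow_pos hx n
    rwa [div_pow, ← mul_div_assoc, div_lt_one hxn] at hn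
  obtain ⟨n, hle, hgt⟩ := (h.and_eventually hlt).exists
  exact hle.not_gt hgt

theorem sum_mul_star_sum_of_mul_star_eq_zero {R ι : Type*} [NonUnitalSemiring R] [StarRing R]
    {s : Finset ι} {T : ι → R} (horth : ∀ i ∈ s, ∀ j ∈ s, i ≠ j → T i * star (T j) = 0) :
    (∑ i ∈ s, T i) * star (∑ i ∈ s, T i) = ∑ i ∈ s, T i * star (T i) := by
  rw [star_sum, sum_mul_sum]
  exact sum_congr rfl fun i hi =>
    sum_eq_single_of_mem i hi fun j hj hji => horth i hi j hj hji.symm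

section CStarRing

variable {E ι : Type*} {s : Finset ι} {T : ι → E} {C : ℝ}

theorem norm_le_sqrt_of_sum_norm_star_mul_le [NonUnitalNormedRing E] [StarRing E] [CStarRing E]
    {i : ι} (hi : i ∈ s) (hsum : ∑ j ∈ s, ‖star (T i) * T j‖ ≤ C) : ‖T i‖ ≤ √C := by
  have hC : 0 ≤ C := (sum_nonneg fun _ _ => norm_nonneg _).trans hsum
  rw [Real.le_sqrt (norm_nonneg _) hC, sq, ← CStarRing.norm_star_mul_self]
  exact (single_le_sum (fun j _ => norm_nonneg (star (T i) * T j)) hi).trans hsum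

variable [NormedRing E] [StarRing E] [CStarRing E]

theorem norm_star_mul_sum_mul_star_pow_le (hC : 0 ≤ C)
    (hsum : ∀ i ∈ s, ∑ j ∈ s, ‖star (T i) * T j‖ ≤ C) (n : ℕ) {i : ι} (hi : i ∈ s) :
    ‖star (T i) * (∑ j ∈ s, T j * star (T j)) ^ n‖ ≤ √C * C ^ n := by
  induction n generalizing i with
  | zero => simpa using norm_le_sqrt_of_sum_norm_star_mul_le hi (hsum i hi)
  | succ n ih =>
    have hexpand : star (T i) * (∑ j ∈ s, T j * star (T j)) ^ (n + 1) =
        ∑ j ∈ s, star (T i) * T j * (star (T j) * (∑ j ∈ s, T j * star (T j)) ^ n) := by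
      simp only [pow_succ', sum_mul, mul_sum, mul_assoc]
    calc ‖star (T i) * (∑ j ∈ s, T j * star (T j)) ^ (n + 1)‖
        ≤ ∑ j ∈ s, ‖star (T i) * T j‖ * (√C * C ^ n) := by
          rw [hexpand]
          refine (norm_sum_le _ _).trans (sum_le_sum fun j hj => ?_)
          exact (norm_mul_le _ _).trans (by gcongr; exact ih hj)
      _ ≤ C * (√C * C ^ n) := by
          rw [← sum_mul]
          gcongr
          exact hsum i hi
      _ = √C * C ^ (n + 1) := by ring

theorem norm_sum_mul_star_pow_le (hC : 0 ≤ C)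
    (hsum : ∀ i ∈ s, ∑ j ∈ s, ‖star (T i) * T j‖ ≤ C) {n : ℕ} (hn : n ≠ 0) :
    ‖(∑ j ∈ s, T j * star (T j)) ^ n‖ ≤ #s * C ^ n := by
  obtain ⟨n, rfl⟩ := Nat.exists_eq_add_one_of_ne_zero hn
  have hexpand : (∑ j ∈ s, T j * star (T j)) ^ (n + 1) =
      ∑ i ∈ s, T i * (star (T i) * (∑ j ∈ s, T j * star (T j)) ^ n) := by
    simp only [pow_succ', sum_mul, mul_assoc]
  calc ‖(∑ j ∈ s, T j * star (T j)) ^ (n + 1)‖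
      ≤ ∑ i ∈ s, √C * (√C * C ^ n) := by
        rw [hexpand]
        refine (norm_sum_le _ _).trans (sum_le_sum fun i hi => (norm_mul_le _ _).trans ?_)
        gcongr
        · exact norm_le_sqrt_of_sum_norm_star_mul_le hi (hsum i hi)
        · exact norm_star_mul_sum_mul_star_pow_le hC hsum n hi
    _ = #s * C ^ (n + 1) := by
        rw [sum_const, nsmul_eq_mul, ← mul_assoc √C, Real.mul_self_sqrt hC, pow_succ']

theorem norm_sum_le_sqrt_of_mul_star_eq_zero
    (horth : ∀ i ∈ s, ∀ j ∈ s, i ≠ j → T i * star (T j) = 0)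
    (hsum : ∀ i ∈ s, ∑ j ∈ s, ‖star (T i) * T j‖ ≤ C) :
    ‖∑ i ∈ s, T i‖ ≤ √C := by
  rcases s.eq_empty_or_nonempty with rfl | ⟨i₀, hi₀⟩
  · simp
  have hC : 0 ≤ C := (sum_nonneg fun _ _ => norm_nonneg _).trans (hsum i₀ hi₀)
  have hSA := sum_mul_star_sum_of_mul_star_eq_zero horth
  have hA : IsSelfAdjoint (∑ i ∈ s, T i * star (T i)) :=
    hSA ▸ IsSelfAdjoint.mul_star_self _
  have hAC : ‖∑ i ∈ s, T i * star (T i)‖ ≤ C := by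
    refine le_of_frequently_pow_le_mul_pow (M := #s) hC <|
      (tendsto_pow_atTop_atTop_of_one_lt one_lt_two).frequently_map _ (fun k hk => hk)
        (Frequently.of_forall fun k => ?_)
    rw [← hA.norm_pow_two_pow]
    exact norm_sum_mul_star_pow_le hC hsum (pow_ne_zero k two_ne_zero)
  rw [Real.le_sqrt (norm_nonneg _) hC, sq, ← CStarRing.norm_self_mul_star, hSA]
  exact hAC

end CStarRing

/-- One-sided Cotlar–Stein lemma: if `T_i T_{i'}* = 0` for `i ≠ i'` and
`Σ_{i'} ‖T_i* T_{i'}‖ ≤ C` uniformly in `i`, then `‖Σ T_i‖ ≤ √C`. -/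
theorem stmt_7 {H : Type*} [NormedAddCommGroup H] [InnerProductSpace ℂ H] [CompleteSpace H]
    {ι : Type*} (s : Finset ι) (T : ι → H →L[ℂ] H) (C : ℝ)
    (horth : ∀ i ∈ s, ∀ i' ∈ s, i ≠ i' →
      (T i) ∘L (ContinuousLinearMap.adjoint (T i')) = 0)
    (hsum : ∀ i ∈ s, ∑ i' ∈ s, ‖(ContinuousLinearMap.adjoint (T i)) ∘L (T i')‖ ≤ C) :
    ‖∑ i ∈ s, T i‖ ≤ Real.sqrt C := by
  simp only [← ContinuousLinearMap.star_eq_adjoint, ← ContinuousLinearMap.mul_def] at horth hsum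
  exact norm_sum_le_sqrt_of_mul_star_eq_zero horth hsum
end

section
/- Let P(h) = 1 + Σ_{i=1}^N a_i h^i be a real polynomial, r₀ = 0, and for i ≥ 1 suppose |a_i| ≤ C·2^{r_i} with r_i ≥ 0. Let Σ be the intersection of the closed half-planes {(x,y) : y ≥ r_i + i·x} for i = 0,…,N, and let x₁ < … < x_n be the x-coordinates of the corner points of the boundary of Σ (so n ≤ N). If additionally |a_i| ≥ C^{-1}2^{r_i} whenever r_i > 0, then there is a constant B = B(C,N) such that |P(h)| ≥ B^{-1} for all h ∈ (0,1] with log₂ h ∉ ⋃_{j=1}^n (x_j − B, x_j + B). -/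
open Set

/-!
Write `x = log₂ h` and `ℓᵢ(t) = rᵢ + i t`, so that `|aᵢ hⁱ| ≍ 2^{ℓᵢ(x)}`. If no corner of
`max_i ℓᵢ` lies within `δ` of `x`, the intermediate value theorem keeps the line `ℓₘ` that is
maximal at `x` maximal on all of `[x - δ, x + δ]`; as the slopes are distinct integers, every other
line then lies at least `δ` below `ℓₘ` at `x`. So the monomial `aₘ hᵐ` (the constant term when
`m = 0`) outweighs the sum of all the others as soon as `2^δ ≥ 2 N C²`.
-/

def MaxAttainedTwice {ι : Type*} (s : Finset ι) (f : ι → ℝ → ℝ) (t : ℝ) : Prop :=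
  ∃ i ∈ s, ∃ j ∈ s, i ≠ j ∧ f i t = f j t ∧ ∀ k ∈ s, f k t ≤ f i t

theorem forall_le_of_not_maxAttainedTwice {ι : Type*} [DecidableEq ι] {s : Finset ι}
    {f : ι → ℝ → ℝ} (hf : ∀ i ∈ s, Continuous (f i)) {m : ι} (hm : m ∈ s) {x y : ℝ}
    (hx : ∀ k ∈ s, f k x ≤ f m x) (hno : ∀ t ∈ uIcc x y, ¬ MaxAttainedTwice s f t) :
    ∀ k ∈ s, f k y ≤ f m y := by
  by_contra! ⟨k, hk, hlt⟩
  have hkm : k ≠ m := by rintro rfl; exact hlt.false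
  have hne : (s.erase m).Nonempty := ⟨k, Finset.mem_erase.2 ⟨hkm, hk⟩⟩
  -- a zero of `ψ` is a point where the maximum is attained both by `m` and by another index
  set ψ : ℝ → ℝ := fun t => f m t - (s.erase m).sup' hne fun j => f j t
  have hψ : Continuous ψ := (hf m hm).sub <|
    Continuous.finset_sup'_apply hne fun j hj => hf j (Finset.mem_of_mem_erase hj)
  have hψx : 0 ≤ ψ x :=
    sub_nonneg.2 (Finset.sup'_le _ _ fun j hj => hx j (Finset.mem_of_mem_erase hj))
  have hψy : ψ y < 0 :=
    sub_neg.2 (hlt.trans_le (Finset.le_sup' (fun j => f j y) (Finset.mem_erase.2 ⟨hkm, hk⟩)))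
  obtain ⟨t, ht, hψt⟩ :=
    intermediate_value_uIcc hψ.continuousOn (mem_uIcc.2 (Or.inr ⟨hψy.le, hψx⟩))
  obtain ⟨j, hj, hjt⟩ := Finset.exists_mem_eq_sup' hne fun j => f j t
  have hmj : f m t = f j t := by rw [← hjt]; exact sub_eq_zero.1 hψt
  refine hno t ht ⟨m, hm, j, Finset.mem_of_mem_erase hj, (Finset.ne_of_mem_erase hj).symm, hmj,
    fun i hi => ?_⟩
  rcases eq_or_ne i m with rfl | him
  · exact le_rfl
  · calc f i t ≤ (s.erase m).sup' hne (fun j => f j t) :=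
          Finset.le_sup' (fun j => f j t) (Finset.mem_erase.2 ⟨him, hi⟩)
      _ = f m t := hjt.trans hmj.symm

def line (r : ℕ → ℝ) (i : ℕ) (t : ℝ) : ℝ := r i + i * t

theorem line_add_le_of_le_of_le {r : ℕ → ℝ} {j m : ℕ} (hjm : j ≠ m) {x δ : ℝ} (hδ : 0 ≤ δ)
    (hleft : line r j (x - δ) ≤ line r m (x - δ)) (hright : line r j (x + δ) ≤ line r m (x + δ)) :
    line r j x + δ ≤ line r m x := by
  unfold line at *
  rcases hjm.lt_or_gt with hlt | hgt
  · have : (j : ℝ) + 1 ≤ m := by exact_mod_cast hlt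
    nlinarith
  · have : (m : ℝ) + 1 ≤ j := by exact_mod_cast hgt
    nlinarith

theorem exists_line_gap {N : ℕ} {r : ℕ → ℝ} {x δ : ℝ} (hδ : 0 ≤ δ)
    (hno : ∀ t ∈ Icc (x - δ) (x + δ), ¬ MaxAttainedTwice (Finset.range (N + 1)) (line r) t) :
    ∃ m ≤ N, ∀ j ≤ N, j ≠ m → line r j x + δ ≤ line r m x := by
  obtain ⟨m, hm, hmax⟩ :=
    (Finset.range (N + 1)).exists_max_image (line r · x) Finset.nonempty_range_add_one
  have hcont : ∀ i ∈ Finset.range (N + 1), Continuous (line r i) := fun i _ => by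
    unfold line; fun_prop
  have hx : x ∈ Icc (x - δ) (x + δ) := ⟨by linarith, by linarith⟩
  have hdom : ∀ y ∈ Icc (x - δ) (x + δ), ∀ k ≤ N, line r k y ≤ line r m y := fun y hy k hk =>
    forall_le_of_not_maxAttainedTwice hcont hm hmax
      (fun t ht => hno t (uIcc_subset_Icc hx hy ht)) k (Finset.mem_range_succ_iff.2 hk)
  refine ⟨m, Finset.mem_range_succ_iff.1 hm, fun j hj hjm => line_add_le_of_le_of_le hjm hδ
    (hdom _ ⟨le_rfl, by linarith⟩ j hj) (hdom _ ⟨by linarith, le_rfl⟩ j hj)⟩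

theorem MaxAttainedTwice.exists_eq_of_isGreatest {N : ℕ} {r : ℕ → ℝ} {t v : ℝ}
    (h : MaxAttainedTwice (Finset.range (N + 1)) (line r) t)
    (hv : IsGreatest {y | ∃ i ≤ N, y = line r i t} v) :
    ∃ i ≤ N, ∃ j ≤ N, i ≠ j ∧ line r i t = v ∧ line r j t = v := by
  obtain ⟨i, hi, j, hj, hij, hijt, hmax⟩ := h
  obtain ⟨⟨k, hk, rfl⟩, hvmax⟩ := hv
  rw [Finset.mem_range_succ_iff] at hi hj
  have hik : line r i t = line r k t :=
    le_antisymm (hvmax ⟨i, hi, rfl⟩) (hmax k (Finset.mem_range_succ_iff.2 hk))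
  exact ⟨i, hi, j, hj, hij, hik, hijt ▸ hik⟩

theorem sub_card_mul_le_abs_sum {ι : Type*} [DecidableEq ι] {s : Finset ι} {c : ι → ℝ} {m : ι}
    (hm : m ∈ s) {A ε : ℝ} (hA : A ≤ |c m|) (hε : ∀ j ∈ s, j ≠ m → |c j| ≤ ε) :
    A - (s.erase m).card * ε ≤ |∑ i ∈ s, c i| := by
  have hrest : |∑ i ∈ s.erase m, c i| ≤ (s.erase m).card * ε :=
    calc |∑ i ∈ s.erase m, c i| ≤ ∑ i ∈ s.erase m, |c i| := Finset.abs_sum_le_sum_abs _ _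
      _ ≤ (s.erase m).card • ε := Finset.sum_le_card_nsmul _ _ _ fun j hj =>
          hε j (Finset.mem_of_mem_erase hj) (Finset.ne_of_mem_erase hj)
      _ = _ := nsmul_eq_mul _ _
  have hsplit : |c m| ≤ |∑ i ∈ s, c i| + |∑ i ∈ s.erase m, c i| :=
    calc |c m| = |∑ i ∈ s, c i - ∑ i ∈ s.erase m, c i| := by
          rw [← Finset.add_sum_erase s c hm, add_sub_cancel_right]
      _ ≤ _ := abs_sub _ _
  linarith

theorem abs_mul_pow_eq {h : ℝ} (hh : 0 < h) (b : ℝ) (i : ℕ) :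
    |b * h ^ i| = |b| * 2 ^ ((i : ℝ) * Real.logb 2 h) := by
  rw [abs_mul, abs_of_pos (pow_pos hh i), mul_comm (i : ℝ),
    Real.rpow_mul_natCast zero_le_two, Real.rpow_logb two_pos (by norm_num) hh]

theorem le_abs_sum_of_line_gap {N m : ℕ} (hm : m ≤ N) {r b : ℕ → ℝ} {K δ h : ℝ} (hK : 0 ≤ K)
    (hh : 0 < h) (hub : ∀ i ≤ N, |b i| ≤ K * 2 ^ r i) (hlb : K⁻¹ * 2 ^ r m ≤ |b m|)
    (hgap : ∀ j ≤ N, j ≠ m → line r j (Real.logb 2 h) + δ ≤ line r m (Real.logb 2 h)) :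
    (K⁻¹ - N * (K * 2 ^ (-δ))) * 2 ^ line r m (Real.logb 2 h) ≤
      |∑ i ∈ Finset.range (N + 1), b i * h ^ i| := by
  set x := Real.logb 2 h
  have two_rpow_line : ∀ i, (2 : ℝ) ^ line r i x = 2 ^ r i * 2 ^ ((i : ℝ) * x) := fun i =>
    Real.rpow_add two_pos _ _
  have hA : K⁻¹ * 2 ^ line r m x ≤ |b m * h ^ m| := by
    rw [abs_mul_pow_eq hh, two_rpow_line, ← mul_assoc]
    gcongr
  have hε : ∀ j ∈ Finset.range (N + 1), j ≠ m →
      |b j * h ^ j| ≤ K * 2 ^ (-δ) * 2 ^ line r m x := fun j hj hjm =>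
    calc |b j * h ^ j| ≤ K * 2 ^ r j * 2 ^ ((j : ℝ) * x) := by
          rw [abs_mul_pow_eq hh]; gcongr; exact hub j (Finset.mem_range_succ_iff.1 hj)
      _ = K * 2 ^ line r j x := by rw [two_rpow_line, mul_assoc]
      _ ≤ K * 2 ^ (-δ + line r m x) := by
          gcongr
          · norm_num
          · linarith [hgap j (Finset.mem_range_succ_iff.1 hj) hjm]
      _ = K * 2 ^ (-δ) * 2 ^ line r m x := by rw [Real.rpow_add two_pos, mul_assoc]
  have := sub_card_mul_le_abs_sum (Finset.mem_range_succ_iff.2 hm) hA hε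
  rw [Finset.card_erase_of_mem (Finset.mem_range_succ_iff.2 hm), Finset.card_range,
    Nat.succ_sub_one] at this
  exact (le_of_eq (by ring)).trans this

theorem one_add_sum_Icc_eq_sum_range (N : ℕ) (a : ℕ → ℝ) (h : ℝ) :
    1 + ∑ i ∈ Finset.Icc 1 N, a i * h ^ i =
      ∑ i ∈ Finset.range (N + 1), Function.update a 0 1 i * h ^ i := by
  rw [Finset.range_eq_Ico, Finset.sum_eq_sum_Ico_succ_bot (Nat.succ_pos N),
    zero_add, Nat.succ_eq_add_one, Finset.Ico_add_one_right_eq_Icc]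
  refine congrArg₂ _ (by simp) (Finset.sum_congr rfl fun i hi => ?_)
  rw [Function.update_of_ne (by have := (Finset.mem_Icc.1 hi).1; omega)]

theorem inv_two_mul_le_inv_sub {N K δ : ℝ} (hK : 0 < K) (hKδ : 2 * N * K ^ 2 ≤ 2 ^ δ) :
    (2 * K)⁻¹ ≤ K⁻¹ - N * (K * 2 ^ (-δ)) := by
  rw [Real.rpow_neg zero_le_two]
  have h2δ : (0 : ℝ) < 2 ^ δ := by positivity
  have : N * (K * (2 ^ δ)⁻¹) ≤ (2 * K)⁻¹ := by
    rw [← div_eq_mul_inv, mul_div_assoc', div_le_iff₀ h2δ, mul_inv]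
    calc N * K = 2⁻¹ * K⁻¹ * (2 * N * K ^ 2) := by field_simp
      _ ≤ 2⁻¹ * K⁻¹ * 2 ^ δ := by gcongr
  have : (2 * K)⁻¹ = K⁻¹ - (2 * K)⁻¹ := by rw [mul_inv]; ring
  linarith

theorem inv_two_mul_le_abs_one_add_sum {N m : ℕ} (hm : m ≤ N) {r : ℕ → ℕ} {a : ℕ → ℝ}
    {K δ h : ℝ} (hK : 1 ≤ K) (hδ : 0 < δ) (hKδ : 2 * N * K ^ 2 ≤ 2 ^ δ) (hr0 : r 0 = 0)
    (hub : ∀ i, 1 ≤ i → i ≤ N → |a i| ≤ K * 2 ^ r i)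
    (hlb : ∀ i, 1 ≤ i → i ≤ N → 0 < r i → K⁻¹ * 2 ^ r i ≤ |a i|) (hh : h ∈ Ioc 0 1)
    (hgap : ∀ j ≤ N, j ≠ m → line (r ·) j (Real.logb 2 h) + δ ≤ line (r ·) m (Real.logb 2 h)) :
    (2 * K)⁻¹ ≤ |1 + ∑ i ∈ Finset.Icc 1 N, a i * h ^ i| := by
  set x := Real.logb 2 h
  have hx : x ≤ 0 := Real.logb_nonpos one_lt_two hh.1.le hh.2
  have hline0 : line (r ·) 0 x = 0 := by simp [line, hr0]
  have hlinem : 0 ≤ line (r ·) m x := by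
    rcases eq_or_ne m 0 with rfl | hm0
    · exact hline0.ge
    · linarith [hgap 0 (Nat.zero_le N) hm0.symm]
  have hub' : ∀ i ≤ N, |Function.update a 0 1 i| ≤ K * 2 ^ (r i : ℝ) := fun i hi => by
    rw [Real.rpow_natCast]
    rcases eq_or_ne i 0 with rfl | hi0
    · simpa [hr0] using hK
    · rw [Function.update_of_ne hi0]; exact hub i (Nat.one_le_iff_ne_zero.2 hi0) hi
  have hlb' : K⁻¹ * 2 ^ (r m : ℝ) ≤ |Function.update a 0 1 m| := by
    rw [Real.rpow_natCast]
    rcases eq_or_ne m 0 with rfl | hm0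
    · simpa [hr0] using inv_le_one_of_one_le₀ hK
    · rw [Function.update_of_ne hm0]
      -- `ℓₘ(x) ≥ ℓ₀(x) + δ = δ > 0` while `m x ≤ 0`
      have hrm : (0 : ℝ) < r m := by
        have := hgap 0 (Nat.zero_le N) hm0.symm
        simp only [line] at this hline0
        nlinarith [mul_nonpos_of_nonneg_of_nonpos (Nat.cast_nonneg m) hx]
      exact hlb m (Nat.one_le_iff_ne_zero.2 hm0) hm (by exact_mod_cast hrm)
  calc (2 * K)⁻¹ ≤ (2 * K)⁻¹ * 2 ^ line (r ·) m x :=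
        le_mul_of_one_le_right (by positivity) (Real.one_le_rpow one_le_two hlinem)
    _ ≤ (K⁻¹ - N * (K * 2 ^ (-δ))) * 2 ^ line (r ·) m x := by
        gcongr; exact inv_two_mul_le_inv_sub (by linarith) hKδ
    _ ≤ _ := by
      rw [one_add_sum_Icc_eq_sum_range]
      exact le_abs_sum_of_line_gap hm (by linarith) hh.1 hub' hlb' hgap

theorem stmt_10_general (N : ℕ) (C : ℝ) (hC : 0 < C) :
    ∃ B : ℝ, 0 < B ∧
      ∀ (r : ℕ → ℕ) (a : ℕ → ℝ) (n : ℕ) (xs : ℕ → ℝ) (g : ℝ → ℝ),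
        r 0 = 0 → n ≤ N →
        (∀ i, 1 ≤ i → i ≤ N → |a i| ≤ C * 2 ^ (r i)) →
        (∀ i, 1 ≤ i → i ≤ N → 0 < r i → C⁻¹ * 2 ^ (r i) ≤ |a i|) →
        (∀ x : ℝ, IsGreatest {y : ℝ | ∃ i ≤ N, y = (r i : ℝ) + (i : ℝ) * x} (g x)) →
        (∀ k, 1 ≤ k → k < n → xs k < xs (k + 1)) →
        (∀ x : ℝ,
          (∃ i ≤ N, ∃ j ≤ N, i ≠ j ∧ (r i : ℝ) + (i : ℝ) * x = g x ∧
              (r j : ℝ) + (j : ℝ) * x = g x) ↔ ∃ k, 1 ≤ k ∧ k ≤ n ∧ x = xs k) →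
        ∀ h : ℝ, h ∈ Ioc (0 : ℝ) 1 →
          (∀ k, 1 ≤ k → k ≤ n → B ≤ |Real.logb 2 h - xs k|) →
          B⁻¹ ≤ |1 + ∑ i ∈ Finset.Icc 1 N, a i * h ^ i| := by
  set K := max C 1
  have hK : 1 ≤ K := le_max_right _ _
  obtain ⟨n₀, hn₀⟩ := pow_unbounded_of_one_lt (2 * N * K ^ 2) (one_lt_two : (1 : ℝ) < 2)
  set δ := max K n₀
  have hKδ : 2 * N * K ^ 2 ≤ 2 ^ δ := by
    refine hn₀.le.trans ?_
    rw [← Real.rpow_natCast]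
    exact Real.rpow_le_rpow_of_exponent_le one_le_two (le_max_right _ _)
  have hδ : K ≤ δ := le_max_left _ _
  refine ⟨2 * δ, by positivity, fun r a n xs g hr0 _ hub hlb hg _ hcorner h hh hfar => ?_⟩
  set x := Real.logb 2 h
  have hno : ∀ t ∈ Icc (x - δ) (x + δ),
      ¬ MaxAttainedTwice (Finset.range (N + 1)) (line (r ·)) t := by
    rintro t ⟨htl, htr⟩ htwice
    obtain ⟨k, hk1, hkn, rfl⟩ := (hcorner t).1 (htwice.exists_eq_of_isGreatest (hg t))
    have : |x - xs k| ≤ δ := abs_sub_le_iff.2 ⟨by linarith, by linarith⟩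
    linarith [hfar k hk1 hkn]
  obtain ⟨m, hm, hgap⟩ := exists_line_gap (by linarith) hno
  calc (2 * δ)⁻¹ ≤ (2 * K)⁻¹ := by gcongr
    _ ≤ _ := inv_two_mul_le_abs_one_add_sum hm hK (by linarith) hKδ hr0
        (fun i h1 h2 => (hub i h1 h2).trans (by gcongr; exact le_max_left _ _))
        (fun i h1 h2 hr => le_trans (by gcongr; exact le_max_left _ _) (hlb i h1 h2 hr)) hh hgap

/-- Outside `B`-neighborhoods of the corner abscissas of the Newton-type convex
region `Σ = {(x,y) : y ≥ r_i + i·x, i = 0,…,N}` (whose boundary is the graph of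
`g(x) = max_i (r_i + i x)`, with corners exactly where the max is attained twice),
a polynomial `P(h) = 1 + Σ a_i h^i` with `|a_i| ≍ 2^{r_i}` satisfies
`|P(h)| ≥ B⁻¹` for `h ∈ (0,1]`, with `B = B(C,N)`. -/
theorem stmt_10 (N : ℕ) (hN : 1 ≤ N) (C : ℝ) (hC : 0 < C) :
    ∃ B : ℝ, 0 < B ∧
      ∀ (r : ℕ → ℕ) (a : ℕ → ℝ) (n : ℕ) (xs : ℕ → ℝ) (g : ℝ → ℝ),
        r 0 = 0 → n ≤ N →
        (∀ i, 1 ≤ i → i ≤ N → |a i| ≤ C * 2 ^ (r i)) →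
        (∀ i, 1 ≤ i → i ≤ N → 0 < r i → C⁻¹ * 2 ^ (r i) ≤ |a i|) →
        (∀ x : ℝ, IsGreatest {y : ℝ | ∃ i ≤ N, y = (r i : ℝ) + (i : ℝ) * x} (g x)) →
        (∀ k, 1 ≤ k → k < n → xs k < xs (k + 1)) →
        (∀ x : ℝ,
          (∃ i ≤ N, ∃ j ≤ N, i ≠ j ∧ (r i : ℝ) + (i : ℝ) * x = g x ∧
              (r j : ℝ) + (j : ℝ) * x = g x) ↔ ∃ k, 1 ≤ k ∧ k ≤ n ∧ x = xs k) →
        ∀ h : ℝ, h ∈ Ioc (0 : ℝ) 1 →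
          (∀ k, 1 ≤ k → k ≤ n → B ≤ |Real.logb 2 h - xs k|) →
          B⁻¹ ≤ |1 + ∑ i ∈ Finset.Icc 1 N, a i * h ^ i| :=
  stmt_10_general N C hC
end
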